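/- Let p⁰(x), u⁰(x,Z) satisfy, for a.e. x ∈ ω and N(x) > 0: N(x) Z ∂_Z u⁰ − ∂²_{ZZ} u⁰ + h₁(x)² ∇_x p⁰(x) = 0 on Z ∈ (0,1), with u⁰(x,0) = U_b, u⁰(x,1) = 0, and suppose div_x(h₁ ∫₀^1 u⁰ dZ) = 0. Then p⁰ satisfies the modified Reynolds equation div_x((h₁³/12) A(N) ∇_x p⁰) = div_x(h₁ B(N) U_b), where A(N) = (12/N)(e^{N/2} ∫₀^1 e^{−Nt²/2} dt − 1) − (12/N)(e^{N/2} − 1)(∫₀^1∫₀^s e^{N(s²−t²)/2} dt ds)/(∫₀^1 e^{Ns²/2} ds) and B(N) = (1/N)(e^{N/2} − 1)/(∫₀^1 e^{Ns²/2} ds). -/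

import Mathlib

open MeasureTheory Real

/-- Divergence of a vector field on Euclidean space. -/
noncomputable def ediv {m : ℕ} (F : EuclideanSpace ℝ (Fin m) → EuclideanSpace ℝ (Fin m))
    (x : EuclideanSpace ℝ (Fin m)) : ℝ :=
  ∑ i, fderiv ℝ F x (EuclideanSpace.single i 1) i

/-- The modified Poiseuille coefficient `A(N)`. -/
noncomputable def Acoef (N : ℝ) : ℝ :=
  (12 / N) * (Real.exp (N / 2) * (∫ t in (0:ℝ)..1, Real.exp (-N * t^2 / 2)) - 1)
    - (12 / N) * (Real.exp (N / 2) - 1)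
      * (∫ s in (0:ℝ)..1, ∫ t in (0:ℝ)..s, Real.exp (N * (s^2 - t^2) / 2))
      / (∫ s in (0:ℝ)..1, Real.exp (N * s^2 / 2))

/-- The modified Couette coefficient `B(N)`. -/
noncomputable def Bcoef (N : ℝ) : ℝ :=
  (1 / N) * (Real.exp (N / 2) - 1) / (∫ s in (0:ℝ)..1, Real.exp (N * s^2 / 2))

/-!
For fixed `x`, the equation `N Z u' - u'' + c = 0` (with `c = h₁² ∇p⁰`) is a first-order linear
equation for `u'`, solved with the integrating factor `e^{-NZ²/2}`:
`u'(Z) = e^{NZ²/2} (u'(0) + (∫₀^Z e^{-Nt²/2} dt) c)`. The boundary conditions give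
`∫₀¹ u' = -U_b`, which fixes `u'(0)`, and integrating by parts against `Z`,
`∫₀¹ u = -∫₀¹ Z u'`, yields `h₁ ∫₀¹ u⁰ = h₁ B(N) U_b - (h₁³/12) A(N) ∇p⁰` on `ω`. Taking the
divergence of this identity is legitimate because `A` and `B` are differentiable away from
`N = 0` (differentiation under the integral sign), and it gives the Reynolds equation.
-/

open Set Filter Topology intervalIntegral

theorem hasDerivAt_intervalIntegral_of_continuous {E : Type*} [NormedAddCommGroup E]
    [NormedSpace ℝ E] {F F' : ℝ → ℝ → E} (hF : Continuous F.uncurry)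
    (hF' : Continuous F'.uncurry) (hd : ∀ N t, HasDerivAt (F · t) (F' N t) N) (a b N₀ : ℝ) :
    HasDerivAt (fun N => ∫ t in a..b, F N t) (∫ t in a..b, F' N₀ t) N₀ := by
  obtain ⟨C, hC⟩ := ((isCompact_closedBall N₀ 1).prod isCompact_uIcc).exists_bound_of_continuousOn
    hF'.continuousOn
  exact (hasDerivAt_integral_of_dominated_loc_of_deriv_le (bound := fun _ => C)
    (Metric.ball_mem_nhds N₀ one_pos)
    (Eventually.of_forall fun N => (hF.uncurry_left N).aestronglyMeasurable)
    ((hF.uncurry_left N₀).intervalIntegrable a b) (hF'.uncurry_left N₀).aestronglyMeasurable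
    (ae_of_all _ fun t ht N hN =>
      hC (N, t) ⟨Metric.ball_subset_closedBall hN, uIoc_subset_uIcc ht⟩)
    intervalIntegrable_const (ae_of_all _ fun t _ N _ => hd N t)).2

theorem hasDerivAt_exp_mul_div_two (k N : ℝ) :
    HasDerivAt (fun N => exp (N * k / 2)) (exp (N * k / 2) * (k / 2)) N := by
  simpa [mul_div_assoc] using ((hasDerivAt_id N).mul_const (k / 2)).exp

theorem hasDerivAt_exp_mul_sq_div_two (N Z : ℝ) :
    HasDerivAt (fun Z => exp (N * Z ^ 2 / 2)) (N * Z * exp (N * Z ^ 2 / 2)) Z := by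
  convert (((hasDerivAt_pow 2 Z).const_mul N).div_const 2).exp using 1
  ring

section Coefficients

theorem integral_exp_mul_sq_pos (N : ℝ) : 0 < ∫ s in (0:ℝ)..1, exp (N * s ^ 2 / 2) :=
  intervalIntegral_pos_of_pos_on ((by fun_prop : Continuous _).intervalIntegrable 0 1)
    (fun _ _ => exp_pos _) one_pos

theorem differentiableAt_integral_exp_mul_sq (N : ℝ) :
    DifferentiableAt ℝ (fun N => ∫ s in (0:ℝ)..1, exp (N * s ^ 2 / 2)) N :=
  (hasDerivAt_intervalIntegral_of_continuous (by fun_prop) (by fun_prop)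
    (fun N s => hasDerivAt_exp_mul_div_two (s ^ 2) N) 0 1 N).differentiableAt

theorem differentiableAt_integral_exp_neg_mul_sq (N : ℝ) :
    DifferentiableAt ℝ (fun N => ∫ t in (0:ℝ)..1, exp (-N * t ^ 2 / 2)) N := by
  simp only [neg_mul, ← mul_neg]
  exact (hasDerivAt_intervalIntegral_of_continuous (by fun_prop) (by fun_prop)
    (fun N t => hasDerivAt_exp_mul_div_two (-t ^ 2) N) 0 1 N).differentiableAt

theorem differentiableAt_integral_integral_exp (N : ℝ) :
    DifferentiableAt ℝ
      (fun N => ∫ s in (0:ℝ)..1, ∫ t in (0:ℝ)..s, exp (N * (s ^ 2 - t ^ 2) / 2)) N := by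
  have hcont : Continuous (Function.uncurry fun N s =>
      ∫ t in (0:ℝ)..s, exp (N * (s ^ 2 - t ^ 2) / 2)) :=
    continuous_parametric_intervalIntegral_of_continuous (by fun_prop) continuous_snd
  have hcont' : Continuous (Function.uncurry fun N s =>
      ∫ t in (0:ℝ)..s, exp (N * (s ^ 2 - t ^ 2) / 2) * ((s ^ 2 - t ^ 2) / 2)) :=
    continuous_parametric_intervalIntegral_of_continuous (by fun_prop) continuous_snd
  exact (hasDerivAt_intervalIntegral_of_continuous hcont hcont'
    (fun N s => hasDerivAt_intervalIntegral_of_continuous (by fun_prop) (by fun_prop)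
      (fun N t => hasDerivAt_exp_mul_div_two _ N) 0 s N) 0 1 N).differentiableAt

theorem differentiableAt_Bcoef {N : ℝ} (hN : N ≠ 0) : DifferentiableAt ℝ Bcoef N := by
  unfold Bcoef
  have := differentiableAt_integral_exp_mul_sq N
  fun_prop (disch := first | exact hN | exact (integral_exp_mul_sq_pos N).ne')

theorem differentiableAt_Acoef {N : ℝ} (hN : N ≠ 0) : DifferentiableAt ℝ Acoef N := by
  unfold Acoef
  have := differentiableAt_integral_exp_mul_sq N
  have := differentiableAt_integral_exp_neg_mul_sq N
  have := differentiableAt_integral_integral_exp N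
  fun_prop (disch := first | exact hN | exact (integral_exp_mul_sq_pos N).ne')

end Coefficients

section GaussianMoments

theorem integral_mul_exp_mul_sq {N : ℝ} (hN : N ≠ 0) :
    ∫ Z in (0:ℝ)..1, Z * exp (N * Z ^ 2 / 2) = (exp (N / 2) - 1) / N := by
  have hF : ∀ Z, HasDerivAt (fun Z => exp (N * Z ^ 2 / 2) / N) (Z * exp (N * Z ^ 2 / 2)) Z :=
    fun Z => ((hasDerivAt_exp_mul_sq_div_two N Z).div_const N).congr_deriv (by field_simp)
  rw [integral_eq_sub_of_hasDerivAt (fun Z _ => hF Z)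
    ((by fun_prop : Continuous _).intervalIntegrable _ _)]
  norm_num
  ring

theorem integral_mul_exp_mul_sq_mul_primitive {N : ℝ} (hN : N ≠ 0) :
    ∫ Z in (0:ℝ)..1, Z * exp (N * Z ^ 2 / 2) * ∫ t in (0:ℝ)..Z, exp (-N * t ^ 2 / 2)
      = (exp (N / 2) * (∫ t in (0:ℝ)..1, exp (-N * t ^ 2 / 2)) - 1) / N := by
  have hψ : Continuous fun t => exp (-N * t ^ 2 / 2) := by fun_prop
  have hF : ∀ Z, HasDerivAt
      (fun Z => exp (N * Z ^ 2 / 2) / N * (∫ t in (0:ℝ)..Z, exp (-N * t ^ 2 / 2)) - Z / N)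
      (Z * exp (N * Z ^ 2 / 2) * ∫ t in (0:ℝ)..Z, exp (-N * t ^ 2 / 2)) Z := by
    intro Z
    refine ((((hasDerivAt_exp_mul_sq_div_two N Z).div_const N).mul
      (hψ.integral_hasStrictDerivAt 0 Z).hasDerivAt).sub
        ((hasDerivAt_id Z).div_const N)).congr_deriv ?_
    have hφψ : exp (N * Z ^ 2 / 2) * exp (-N * Z ^ 2 / 2) = 1 := by
      rw [← exp_add, ← exp_zero]; ring_nf
    rw [show exp (N * Z ^ 2 / 2) / N * exp (-N * Z ^ 2 / 2) = 1 / N by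
      rw [div_mul_eq_mul_div, hφψ]]
    field_simp
    ring
  rw [integral_eq_sub_of_hasDerivAt (fun Z _ => hF Z)
    ((by fun_prop : Continuous _).intervalIntegrable _ _)]
  norm_num
  ring

theorem integral_integral_exp_mul_sub_sq (N : ℝ) :
    ∫ s in (0:ℝ)..1, ∫ t in (0:ℝ)..s, exp (N * (s ^ 2 - t ^ 2) / 2)
      = ∫ s in (0:ℝ)..1, exp (N * s ^ 2 / 2) * ∫ t in (0:ℝ)..s, exp (-N * t ^ 2 / 2) := by
  refine integral_congr fun s _ => ?_
  rw [← intervalIntegral.integral_const_mul]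
  refine integral_congr fun t _ => ?_
  rw [← exp_add]
  ring_nf

end GaussianMoments

section VerticalProfile

variable {E : Type*} [NormedAddCommGroup E] [NormedSpace ℝ E] [CompleteSpace E]

theorem integral_eq_neg_integral_smul_deriv {u : ℝ → E} (hu : ContDiff ℝ 1 u) (hb1 : u 1 = 0) :
    ∫ Z in (0:ℝ)..1, u Z = -∫ Z in (0:ℝ)..1, Z • deriv u Z := by
  have hIBP := integral_smul_deriv_eq_deriv_smul (a := 0) (b := 1)
    (fun Z _ => hasDerivAt_id Z) (fun Z _ => ((hu.differentiable one_ne_zero) Z).hasDerivAt)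
    intervalIntegrable_const (hu.continuous_deriv le_rfl |>.intervalIntegrable _ _)
  simp only [id, hb1, one_smul, zero_smul, sub_zero, smul_zero] at hIBP
  rw [hIBP, zero_sub, neg_neg]

theorem deriv_eq_of_ode {N : ℝ} {u : ℝ → E} (hu : ContDiff ℝ 2 u) {c : E}
    (hode : ∀ Z ∈ Ioo (0:ℝ) 1, (N * Z) • deriv u Z - deriv (deriv u) Z + c = 0)
    {Z : ℝ} (hZ : Z ∈ Icc (0:ℝ) 1) :
    deriv u Z =
      exp (N * Z ^ 2 / 2) • (deriv u 0 + (∫ t in (0:ℝ)..Z, exp (-N * t ^ 2 / 2)) • c) := by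
  have hu' : ContDiff ℝ 1 (deriv u) := hu.deriv' (n := 1)
  have hu'c : Continuous (deriv u) := hu'.continuous
  have hv : ∀ t ∈ Ioo (0:ℝ) Z, HasDerivAt (fun t => exp (-N * t ^ 2 / 2) • deriv u t)
      (exp (-N * t ^ 2 / 2) • c) t := by
    intro t ht
    have hu'' : deriv (deriv u) t = (N * t) • deriv u t + c := by
      rw [← sub_eq_zero, ← neg_eq_zero, ← hode t ⟨ht.1, ht.2.trans_le hZ.2⟩]; abel
    refine ((hasDerivAt_exp_mul_sq_div_two (-N) t).smul
      ((hu'.differentiable one_ne_zero) t).hasDerivAt).congr_deriv ?_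
    rw [hu'']
    module
  have hFTC := integral_eq_sub_of_hasDerivAt_of_le hZ.1
    (by fun_prop : Continuous fun t => exp (-N * t ^ 2 / 2) • deriv u t).continuousOn hv
    ((by fun_prop : Continuous fun t => exp (-N * t ^ 2 / 2) • c).intervalIntegrable 0 Z)
  rw [intervalIntegral.integral_smul_const] at hFTC
  simp only [zero_pow two_ne_zero, mul_zero, zero_div, exp_zero, one_smul] at hFTC
  rw [hFTC, add_sub_cancel, smul_smul, ← exp_add,
    show N * Z ^ 2 / 2 + -N * Z ^ 2 / 2 = 0 by ring, exp_zero, one_smul]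

theorem integral_smul_deriv_eq_of_ode {N : ℝ} {u : ℝ → E} (hu : ContDiff ℝ 2 u) {c : E}
    (hode : ∀ Z ∈ Ioo (0:ℝ) 1, (N * Z) • deriv u Z - deriv (deriv u) Z + c = 0)
    {g : ℝ → ℝ} (hg : Continuous g) :
    ∫ Z in (0:ℝ)..1, g Z • deriv u Z
      = (∫ Z in (0:ℝ)..1, g Z * exp (N * Z ^ 2 / 2)) • deriv u 0
        + (∫ Z in (0:ℝ)..1, g Z * exp (N * Z ^ 2 / 2) * ∫ t in (0:ℝ)..Z, exp (-N * t ^ 2 / 2))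
          • c := by
  have hpt : EqOn (fun Z => g Z • deriv u Z) (fun Z => (g Z * exp (N * Z ^ 2 / 2)) • deriv u 0
      + (g Z * exp (N * Z ^ 2 / 2) * ∫ t in (0:ℝ)..Z, exp (-N * t ^ 2 / 2)) • c) (uIcc 0 1) := by
    intro Z hZ
    rw [uIcc_of_le zero_le_one] at hZ
    simp only [deriv_eq_of_ode hu hode hZ]
    module
  rw [integral_congr hpt, integral_add ((by fun_prop : Continuous fun Z => _).intervalIntegrable _ _)
      ((by fun_prop : Continuous fun Z => _).intervalIntegrable _ _),
    intervalIntegral.integral_smul_const, intervalIntegral.integral_smul_const]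

theorem integral_eq_of_ode {N : ℝ} (hN : N ≠ 0) {u : ℝ → E} (hu : ContDiff ℝ 2 u) {c Ub : E}
    (hode : ∀ Z ∈ Ioo (0:ℝ) 1, (N * Z) • deriv u Z - deriv (deriv u) Z + c = 0)
    (hb0 : u 0 = Ub) (hb1 : u 1 = 0) :
    ∫ Z in (0:ℝ)..1, u Z = Bcoef N • Ub - (Acoef N / 12) • c := by
  have hbdry := integral_smul_deriv_eq_of_ode hu hode (g := fun _ => 1) continuous_const
  have hmoment := integral_smul_deriv_eq_of_ode hu hode (g := id) continuous_id
  simp only [one_smul, one_mul, id] at hbdry hmoment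
  rw [integral_deriv_eq_sub (fun Z _ => (hu.differentiable two_ne_zero) Z)
    ((hu.continuous_deriv one_le_two).intervalIntegrable _ _), hb0, hb1, zero_sub] at hbdry
  rw [integral_eq_neg_integral_smul_deriv (hu.of_le one_le_two) hb1, hmoment,
    integral_mul_exp_mul_sq hN, integral_mul_exp_mul_sq_mul_primitive hN, Acoef, Bcoef,
    integral_integral_exp_mul_sub_sq]
  set I := ∫ Z in (0:ℝ)..1, exp (N * Z ^ 2 / 2)
  set K := ∫ Z in (0:ℝ)..1, exp (N * Z ^ 2 / 2) * ∫ t in (0:ℝ)..Z, exp (-N * t ^ 2 / 2)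
  have hI : I ≠ 0 := (integral_exp_mul_sq_pos N).ne'
  have ha : deriv u 0 = I⁻¹ • (-Ub - K • c) := by
    rw [hbdry, add_sub_cancel_right, inv_smul_smul₀ hI]
  rw [ha]
  match_scalars
  · field_simp
  · field_simp
    ring

end VerticalProfile

theorem ContDiff.differentiable_gradient {F : Type*} [NormedAddCommGroup F]
    [InnerProductSpace ℝ F] [CompleteSpace F] {f : F → ℝ} {n : WithTop ℕ∞}
    (hf : ContDiff ℝ n f) (hn : 2 ≤ n) : Differentiable ℝ (gradient f) :=
  (InnerProductSpace.toDual ℝ F).symm.differentiable.comp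
    ((hf.fderiv_right (m := 1) (one_add_one_eq_two.trans_le hn)).differentiable one_ne_zero)

section Divergence

variable {m : ℕ} {F G : EuclideanSpace ℝ (Fin m) → EuclideanSpace ℝ (Fin m)}
  {x : EuclideanSpace ℝ (Fin m)}

theorem Filter.EventuallyEq.ediv_eq (h : F =ᶠ[𝓝 x] G) : ediv F x = ediv G x := by
  rw [ediv, ediv, h.fderiv_eq]

theorem ediv_sub (hF : DifferentiableAt ℝ F x) (hG : DifferentiableAt ℝ G x) :
    ediv (fun y => F y - G y) x = ediv F x - ediv G x := by
  rw [ediv, ediv, ediv, fderiv_fun_sub hF hG, ← Finset.sum_sub_distrib]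
  rfl

end Divergence

theorem stmt14_general {m : ℕ} (ω : Set (EuclideanSpace ℝ (Fin m))) (hω : IsOpen ω)
    (h₁ Nf p0 : EuclideanSpace ℝ (Fin m) → ℝ)
    (u0 : EuclideanSpace ℝ (Fin m) → ℝ → EuclideanSpace ℝ (Fin m))
    (Ub : EuclideanSpace ℝ (Fin m))
    (hh₁ : ContDiff ℝ 1 h₁)
    (hN : ContDiff ℝ 1 Nf) (hNpos : ∀ x ∈ ω, 0 < Nf x)
    (hp0 : ContDiff ℝ 2 p0)
    (hu0Z : ∀ x ∈ ω, ContDiff ℝ 2 (u0 x))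
    (hode : ∀ x ∈ ω, ∀ Z ∈ Set.Ioo (0:ℝ) 1,
      (Nf x * Z) • deriv (u0 x) Z - deriv (deriv (u0 x)) Z
        + ((h₁ x) ^ 2) • gradient p0 x = 0)
    (hb0 : ∀ x ∈ ω, u0 x 0 = Ub) (hb1 : ∀ x ∈ ω, u0 x 1 = 0)
    (hdiv : ∀ x ∈ ω, ediv (fun y => h₁ y • (∫ Z in (0:ℝ)..1, u0 y Z)) x = 0) :
    ∀ x ∈ ω,
      ediv (fun y => ((h₁ y) ^ 3 / 12 * Acoef (Nf y)) • gradient p0 y) x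
        = ediv (fun y => (h₁ y * Bcoef (Nf y)) • Ub) x := by
  intro x hx
  have hh₁x := hh₁.differentiable one_ne_zero x
  have hNx := hN.differentiable one_ne_zero x
  have hA := differentiableAt_Acoef (hNpos x hx).ne'
  have hB := differentiableAt_Bcoef (hNpos x hx).ne'
  have hgrad := hp0.differentiable_gradient le_rfl
  have hPoiseuille : DifferentiableAt ℝ
      (fun y => ((h₁ y) ^ 3 / 12 * Acoef (Nf y)) • gradient p0 y) x := by
    fun_prop
  have hCouette : DifferentiableAt ℝ (fun y => (h₁ y * Bcoef (Nf y)) • Ub) x := by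
    fun_prop
  have hflux : ∀ y ∈ ω, h₁ y • ∫ Z in (0:ℝ)..1, u0 y Z
      = (h₁ y * Bcoef (Nf y)) • Ub - ((h₁ y) ^ 3 / 12 * Acoef (Nf y)) • gradient p0 y := by
    intro y hy
    rw [integral_eq_of_ode (hNpos y hy).ne' (hu0Z y hy) (hode y hy) (hb0 y hy) (hb1 y hy)]
    module
  have h := hdiv x hx
  rw [(eventuallyEq_of_mem (hω.mem_nhds hx) hflux).ediv_eq, ediv_sub hCouette hPoiseuille,
    sub_eq_zero] at h
  exact h.symm

/-- If `u⁰` solves the vertical momentum equation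
`N(x) Z ∂_Z u⁰ − ∂²_{ZZ} u⁰ + h₁(x)² ∇_x p⁰ = 0` with `u⁰(x,0) = U_b`, `u⁰(x,1) = 0`,
and `div_x (h₁ ∫₀¹ u⁰ dZ) = 0`, then `p⁰` satisfies the modified Reynolds equation
`div_x((h₁³/12) A(N) ∇_x p⁰) = div_x(h₁ B(N) U_b)` on `ω`. -/
theorem stmt14 {m : ℕ} (ω : Set (EuclideanSpace ℝ (Fin m))) (hω : IsOpen ω)
    (h₁ Nf p0 : EuclideanSpace ℝ (Fin m) → ℝ)
    (u0 : EuclideanSpace ℝ (Fin m) → ℝ → EuclideanSpace ℝ (Fin m))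
    (Ub : EuclideanSpace ℝ (Fin m))
    (hh₁ : ContDiff ℝ 1 h₁) (hh₁pos : ∀ x ∈ ω, 0 < h₁ x)
    (hN : ContDiff ℝ 1 Nf) (hNpos : ∀ x ∈ ω, 0 < Nf x)
    (hp0 : ContDiff ℝ 2 p0)
    (hu0Z : ∀ x ∈ ω, ContDiff ℝ 2 (u0 x))
    (hode : ∀ x ∈ ω, ∀ Z ∈ Set.Ioo (0:ℝ) 1,
      (Nf x * Z) • deriv (u0 x) Z - deriv (deriv (u0 x)) Z
        + ((h₁ x) ^ 2) • gradient p0 x = 0)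
    (hb0 : ∀ x ∈ ω, u0 x 0 = Ub) (hb1 : ∀ x ∈ ω, u0 x 1 = 0)
    (hdiv : ∀ x ∈ ω, ediv (fun y => h₁ y • (∫ Z in (0:ℝ)..1, u0 y Z)) x = 0) :
    ∀ x ∈ ω,
      ediv (fun y => ((h₁ y) ^ 3 / 12 * Acoef (Nf y)) • gradient p0 y) x
        = ediv (fun y => (h₁ y * Bcoef (Nf y)) • Ub) x :=
  stmt14_general ω hω h₁ Nf p0 u0 Ub hh₁ hN hNpos hp0 hu0Z hode hb0 hb1 hdiv
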